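/- arXiv:1811.05338 — 2 statements merged into one kernel-verified Lean document; each statement's English description precedes it below -/
import Mathlib

section
/- Let η(ρ, ε) = f₂(ρ)·ε + f₃(ρ) with f₂ nowhere zero, let Φ₁(ρ, ε) = f₁(ρ), let q₁(ρ, ε) = Q(ρ) where Q'(ρ) = f₁'(ρ)/f₂(ρ), and let p(ρ, ε) = −ρ²(f₂'(ρ)ε + f₃'(ρ))/f₂(ρ), where f₁, f₂, f₃ are C¹ functions of ρ. Then the three gas-dynamics constraint equations ∂Φ₁/∂ρ − (∂η/∂ε)(∂q₁/∂ρ) = 0, ∂Φ₁/∂ε − (∂η/∂ε)(∂q₁/∂ε) = 0, and p(∂η/∂ε) + ρ²(∂η/∂ρ) = 0 all hold (for ρ ≠ 0). -/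
/-!
The entropy η is affine in ε with slope f₂(ρ), while Φ₁ and q₁ depend on ρ alone. Hence
∂Φ₁/∂ε = ∂q₁/∂ε = 0, the relation Q' = f₁'/f₂ is exactly the first constraint, and p was chosen
as -ρ² (∂η/∂ρ)/(∂η/∂ε), which is the third.
-/

open ContinuousLinearMap

section

variable {𝕜 : Type*} [NontriviallyNormedField 𝕜]
  {E F G : Type*} [NormedAddCommGroup E] [NormedSpace 𝕜 E] [NormedAddCommGroup F] [NormedSpace 𝕜 F]
  [NormedAddCommGroup G] [NormedSpace 𝕜 G]

/-- No differentiability is needed: if `g` is not differentiable at `p.1`, neither is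
`g ∘ Prod.fst` at `p`, and both derivatives take the junk value `0`. -/
theorem fderiv_comp_fst (g : E → G) (p : E × F) :
    fderiv 𝕜 (fun y : E × F => g y.1) p = (fderiv 𝕜 g p.1).comp (fst 𝕜 E F) := by
  by_cases hg : DifferentiableAt 𝕜 g p.1
  · exact (hg.hasFDerivAt.comp p hasFDerivAt_fst).fderiv
  · have hslice : DifferentiableAt 𝕜 (fun e : E => (e, p.2)) p.1 :=
      differentiableAt_fun_id.prodMk (differentiableAt_const p.2)
    have hgfst : ¬DifferentiableAt 𝕜 (fun y : E × F => g y.1) p := fun h =>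
      hg (DifferentiableAt.comp (g := fun y : E × F => g y.1) p.1 h hslice)
    rw [fderiv_zero_of_not_differentiableAt hg, fderiv_zero_of_not_differentiableAt hgfst,
      zero_comp]

theorem fderiv_comp_fst_apply (g : 𝕜 → G) (p v : 𝕜 × F) :
    fderiv 𝕜 (fun y : 𝕜 × F => g y.1) p v = v.1 • deriv g p.1 := by
  rw [fderiv_comp_fst, comp_apply, coe_fst', fderiv_eq_smul_deriv]

end

theorem fderiv_mul_snd_add_apply {𝕜 : Type*} [NontriviallyNormedField 𝕜] {a b : 𝕜 → 𝕜}
    {p : 𝕜 × 𝕜} (ha : DifferentiableAt 𝕜 a p.1) (hb : DifferentiableAt 𝕜 b p.1) (v : 𝕜 × 𝕜) :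
    fderiv 𝕜 (fun y : 𝕜 × 𝕜 => a y.1 * y.2 + b y.1) p v
      = (deriv a p.1 * p.2 + deriv b p.1) * v.1 + a p.1 * v.2 := by
  have ha' : HasFDerivAt (fun y : 𝕜 × 𝕜 => a y.1) (deriv a p.1 • fst 𝕜 𝕜 𝕜) p :=
    ha.hasDerivAt.comp_hasFDerivAt p hasFDerivAt_fst
  have hb' : HasFDerivAt (fun y : 𝕜 × 𝕜 => b y.1) (deriv b p.1 • fst 𝕜 𝕜 𝕜) p :=
    hb.hasDerivAt.comp_hasFDerivAt p hasFDerivAt_fst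
  rw [((ha'.fun_mul hasFDerivAt_snd).fun_add hb').fderiv]
  simp only [add_apply, smul_apply, coe_fst', coe_snd', smul_eq_mul]
  ring

theorem gas_case2_verification_general (f₁ f₂ f₃ Q : ℝ → ℝ)
    (hf₂ : ContDiff ℝ 1 f₂) (hf₃ : ContDiff ℝ 1 f₃)
    (hf₂ne : ∀ ρ : ℝ, f₂ ρ ≠ 0)
    (hQ' : ∀ ρ : ℝ, deriv Q ρ = deriv f₁ ρ / f₂ ρ)
    (η Φ₁ q₁ p : ℝ × ℝ → ℝ)
    (hηdef : ∀ x : ℝ × ℝ, η x = f₂ x.1 * x.2 + f₃ x.1)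
    (hΦdef : ∀ x : ℝ × ℝ, Φ₁ x = f₁ x.1)
    (hqdef : ∀ x : ℝ × ℝ, q₁ x = Q x.1)
    (hpdef : ∀ x : ℝ × ℝ, p x = -(x.1 ^ 2 * (deriv f₂ x.1 * x.2 + deriv f₃ x.1)) / f₂ x.1) :
    ∀ x : ℝ × ℝ, x.1 ≠ 0 →
      (fderiv ℝ Φ₁ x (1, 0) - fderiv ℝ η x (0, 1) * fderiv ℝ q₁ x (1, 0) = 0 ∧
       fderiv ℝ Φ₁ x (0, 1) - fderiv ℝ η x (0, 1) * fderiv ℝ q₁ x (0, 1) = 0 ∧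
       p x * fderiv ℝ η x (0, 1) + x.1 ^ 2 * fderiv ℝ η x (1, 0) = 0) := by
  obtain rfl : η = fun x => f₂ x.1 * x.2 + f₃ x.1 := funext hηdef
  obtain rfl : Φ₁ = fun x => f₁ x.1 := funext hΦdef
  obtain rfl : q₁ = fun x => Q x.1 := funext hqdef
  intro x _
  have hη := fderiv_mul_snd_add_apply (hf₂.differentiable one_ne_zero x.1)
    (hf₃.differentiable one_ne_zero x.1)
  simp only [hη, fderiv_comp_fst_apply, hpdef, hQ', smul_eq_mul]
  refine ⟨?_, ?_, ?_⟩ <;> field_simp [hf₂ne x.1] <;> ring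

theorem gas_case2_verification (f₁ f₂ f₃ Q : ℝ → ℝ)
    (hf₁ : ContDiff ℝ 1 f₁) (hf₂ : ContDiff ℝ 1 f₂) (hf₃ : ContDiff ℝ 1 f₃)
    (hQ : ContDiff ℝ 1 Q)
    (hf₂ne : ∀ ρ : ℝ, f₂ ρ ≠ 0)
    (hQ' : ∀ ρ : ℝ, deriv Q ρ = deriv f₁ ρ / f₂ ρ)
    (η Φ₁ q₁ p : ℝ × ℝ → ℝ)
    (hηdef : ∀ x : ℝ × ℝ, η x = f₂ x.1 * x.2 + f₃ x.1)
    (hΦdef : ∀ x : ℝ × ℝ, Φ₁ x = f₁ x.1)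
    (hqdef : ∀ x : ℝ × ℝ, q₁ x = Q x.1)
    (hpdef : ∀ x : ℝ × ℝ, p x = -(x.1 ^ 2 * (deriv f₂ x.1 * x.2 + deriv f₃ x.1)) / f₂ x.1) :
    ∀ x : ℝ × ℝ, x.1 ≠ 0 →
      (fderiv ℝ Φ₁ x (1, 0) - fderiv ℝ η x (0, 1) * fderiv ℝ q₁ x (1, 0) = 0 ∧
       fderiv ℝ Φ₁ x (0, 1) - fderiv ℝ η x (0, 1) * fderiv ℝ q₁ x (0, 1) = 0 ∧
       p x * fderiv ℝ η x (0, 1) + x.1 ^ 2 * fderiv ℝ η x (1, 0) = 0) :=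
  gas_case2_verification_general f₁ f₂ f₃ Q hf₂ hf₃ hf₂ne hQ' η Φ₁ q₁ p hηdef hΦdef hqdef hpdef
end

section
/- Let C₀, C₁, C₂ be constants, A : ℝ → ℝ a C¹ function, and η(ρ, ρ_t, θ), Φ₁(ρ,θ), Φ₂(ρ,θ) arbitrary C¹ functions with ∂η/∂θ nowhere zero and C₀ ≠ 0 (so that ∂ε/∂θ = C₀∂η/∂θ ≠ 0). Define ε = A(ρ) + C₀η, q_i = C₀Φ_i + C_i (i = 1,2), T₁₂ = 0, T₁₁ = T₂₂ = −ρ²A'(ρ). Then these functions satisfy the non-simple fluid constraint system: (∂ε/∂θ)(∂Φ_i/∂ρ) − (∂η/∂θ)(∂q_i/∂ρ) = 0, (∂ε/∂θ)(∂Φ_i/∂θ) − (∂η/∂θ)(∂q_i/∂θ) = 0 for i=1,2; (∂ε/∂θ)(∂η/∂ρ_t) − (∂η/∂θ)(∂ε/∂ρ_t) = 0; and ρ²((∂ε/∂ρ)(∂η/∂θ) − (∂ε/∂θ)(∂η/∂ρ))δ_{ij} + (∂η/∂θ)T_{ij} = 0 for i,j = 1,2. -/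
/-!
Since `ε - C₀ η` depends on `ρ` alone and `q_i - C₀ Φ_i` is constant, the `θ`- and
`ρ_t`-derivatives of `ε` and all derivatives of `q_i` are `C₀` times those of `η` and `Φ_i`, so the
first three brackets cancel, and the only surviving term `ρ² A'(ρ) η_θ` of the bracket in the last
equation is cancelled by `η_θ T_ii`.
-/

section

variable {E : Type*} [NormedAddCommGroup E] [NormedSpace ℝ E]

theorem fderiv_const_mul_add_const (c d : ℝ) (f : E → ℝ) (x : E) :
    fderiv ℝ (fun y => c * f y + d) x = c • fderiv ℝ f x := by
  rw [fderiv_add_const]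
  exact congrFun (fderiv_const_smul_field (f := f) c) x

theorem fderiv_comp_fst_add_const_mul_apply {A : ℝ → ℝ} {η : ℝ × E → ℝ} {x : ℝ × E}
    (hA : DifferentiableAt ℝ A x.1) (hη : DifferentiableAt ℝ η x) (c : ℝ) (v : ℝ × E) :
    fderiv ℝ (fun y => A y.1 + c * η y) x v = v.1 * deriv A x.1 + c * fderiv ℝ η x v := by
  have hAfst : HasFDerivAt (fun y : ℝ × E => A y.1)
      (deriv A x.1 • ContinuousLinearMap.fst ℝ ℝ E) x :=
    hA.hasDerivAt.comp_hasFDerivAt x hasFDerivAt_fst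
  rw [(hAfst.fun_add (hη.hasFDerivAt.const_mul c)).fderiv]
  simp [mul_comm]

end

theorem nonsimple_fluid_verification_general (C₀ C₁ C₂ : ℝ)
    (A : ℝ → ℝ) (hA : ContDiff ℝ 1 A)
    (η : ℝ × ℝ × ℝ → ℝ) (hη : ContDiff ℝ 1 η)
    (Φ : Fin 2 → ℝ × ℝ → ℝ)
    (ε : ℝ × ℝ × ℝ → ℝ) (hεdef : ε = fun x => A x.1 + C₀ * η x)
    (q : Fin 2 → ℝ × ℝ → ℝ)
    (hqdef : ∀ i y, q i y = C₀ * Φ i y + (if i = 0 then C₁ else C₂))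
    (T : Fin 2 → Fin 2 → ℝ → ℝ)
    (hTdef : ∀ i j ρ, T i j ρ = if i = j then -(ρ ^ 2 * deriv A ρ) else 0) :
    ∀ x : ℝ × ℝ × ℝ, ∀ i : Fin 2,
      (fderiv ℝ ε x (0, 0, 1) * fderiv ℝ (Φ i) (x.1, x.2.2) (1, 0)
        - fderiv ℝ η x (0, 0, 1) * fderiv ℝ (q i) (x.1, x.2.2) (1, 0) = 0) ∧
      (fderiv ℝ ε x (0, 0, 1) * fderiv ℝ (Φ i) (x.1, x.2.2) (0, 1)
        - fderiv ℝ η x (0, 0, 1) * fderiv ℝ (q i) (x.1, x.2.2) (0, 1) = 0) ∧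
      (fderiv ℝ ε x (0, 0, 1) * fderiv ℝ η x (0, 1, 0)
        - fderiv ℝ η x (0, 0, 1) * fderiv ℝ ε x (0, 1, 0) = 0) ∧
      (∀ j : Fin 2,
        x.1 ^ 2 * (fderiv ℝ ε x (1, 0, 0) * fderiv ℝ η x (0, 0, 1)
          - fderiv ℝ ε x (0, 0, 1) * fderiv ℝ η x (1, 0, 0)) * (if i = j then 1 else 0)
          + fderiv ℝ η x (0, 0, 1) * T i j x.1 = 0) := by
  intro x i
  subst hεdef
  have hε := fderiv_comp_fst_add_const_mul_apply
    (hA.differentiable one_ne_zero x.1) (hη.differentiable one_ne_zero x) C₀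
  have hq (v : ℝ × ℝ) : fderiv ℝ (q i) (x.1, x.2.2) v = C₀ * fderiv ℝ (Φ i) (x.1, x.2.2) v := by
    rw [funext (hqdef i), fderiv_const_mul_add_const]
    rfl
  refine ⟨?_, ?_, ?_, fun j => ?_⟩
  · rw [hε, hq]; ring
  · rw [hε, hq]; ring
  · rw [hε, hε]; ring
  · rw [hε, hε, hTdef]
    split_ifs <;> ring

theorem nonsimple_fluid_verification (C₀ C₁ C₂ : ℝ) (hC₀ : C₀ ≠ 0)
    (A : ℝ → ℝ) (hA : ContDiff ℝ 1 A)
    (η : ℝ × ℝ × ℝ → ℝ) (hη : ContDiff ℝ 1 η)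
    (hηθ : ∀ x : ℝ × ℝ × ℝ, fderiv ℝ η x (0, 0, 1) ≠ 0)
    (Φ : Fin 2 → ℝ × ℝ → ℝ) (hΦ : ∀ i, ContDiff ℝ 1 (Φ i))
    (ε : ℝ × ℝ × ℝ → ℝ) (hεdef : ε = fun x => A x.1 + C₀ * η x)
    (q : Fin 2 → ℝ × ℝ → ℝ)
    (hqdef : ∀ i y, q i y = C₀ * Φ i y + (if i = 0 then C₁ else C₂))
    (T : Fin 2 → Fin 2 → ℝ → ℝ)
    (hTdef : ∀ i j ρ, T i j ρ = if i = j then -(ρ ^ 2 * deriv A ρ) else 0) :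
    ∀ x : ℝ × ℝ × ℝ, ∀ i : Fin 2,
      (fderiv ℝ ε x (0, 0, 1) * fderiv ℝ (Φ i) (x.1, x.2.2) (1, 0)
        - fderiv ℝ η x (0, 0, 1) * fderiv ℝ (q i) (x.1, x.2.2) (1, 0) = 0) ∧
      (fderiv ℝ ε x (0, 0, 1) * fderiv ℝ (Φ i) (x.1, x.2.2) (0, 1)
        - fderiv ℝ η x (0, 0, 1) * fderiv ℝ (q i) (x.1, x.2.2) (0, 1) = 0) ∧
      (fderiv ℝ ε x (0, 0, 1) * fderiv ℝ η x (0, 1, 0)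
        - fderiv ℝ η x (0, 0, 1) * fderiv ℝ ε x (0, 1, 0) = 0) ∧
      (∀ j : Fin 2,
        x.1 ^ 2 * (fderiv ℝ ε x (1, 0, 0) * fderiv ℝ η x (0, 0, 1)
          - fderiv ℝ ε x (0, 0, 1) * fderiv ℝ η x (1, 0, 0)) * (if i = j then 1 else 0)
          + fderiv ℝ η x (0, 0, 1) * T i j x.1 = 0) :=
  nonsimple_fluid_verification_general C₀ C₁ C₂ A hA η hη Φ ε hεdef q hqdef T hTdef
end
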